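/- arXiv:1704.03776 — 3 statements merged into one kernel-verified Lean document; each statement's English description precedes it below -/
import Mathlib

section
/- Let X_1,...,X_{t_n} be i.i.d. real random variables with P(|X| ≥ x) ≤ c·exp(-λ x^α) for all x ≥ 0, where λ > 0, α > 1, c ≥ 1. Then for any a > 0, P(Σ_{i=1}^{t_n} X_i ≥ a√n) ≤ c·t_n·exp(-λ n^α) + (c·n)^{t_n}·exp(-λ (a√n - t_n)^α / t_n^{α-1}) for all n with a√n ≥ t_n. -/
open MeasureTheory ProbabilityTheory Finset

/-!
If `∑ Xᵢ ≥ s`, either some `|Xᵢ| ≥ n`, or all `|Xᵢ| < n` and the integer parts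
`kᵢ = ⌊max Xᵢ 0⌋₊ ∈ {0, …, n - 1}` satisfy `∑ kᵢ ≥ s - tₙ` and `|Xᵢ| ≥ kᵢ`. A union bound
over the `tₙ` events of the first kind and the at most `n ^ tₙ` profiles `k` of the second,
independence, the tail bound and the power-mean inequality `(∑ kᵢ) ^ α ≤ tₙ ^ (α - 1) ∑ kᵢ ^ α`
give the claim.
-/

noncomputable def latticeProfiles (ι : Type*) [Fintype ι] [DecidableEq ι] (n : ℕ) (t : ℝ) :
    Finset (ι → Fin n) :=
  univ.filter fun k => t ≤ ∑ i, ((k i : ℕ) : ℝ)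

section

variable {ι : Type*} [Fintype ι] [DecidableEq ι]

lemma card_latticeProfiles_le (n : ℕ) (t : ℝ) :
    #(latticeProfiles ι n t) ≤ n ^ Fintype.card ι :=
  (card_filter_le _ _).trans (by simp)

lemma exists_mem_latticeProfiles_le_abs {x : ι → ℝ} {n : ℕ} {s : ℝ}
    (hs : s ≤ ∑ i, x i) (hx : ∀ i, |x i| < n) :
    ∃ k ∈ latticeProfiles ι n (s - Fintype.card ι), ∀ i, ((k i : ℕ) : ℝ) ≤ |x i| := by
  have hmax_le : ∀ i, max (x i) 0 ≤ |x i| := fun i => max_le (le_abs_self _) (abs_nonneg _)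
  have hfloor : ∀ i, x i - 1 ≤ (⌊max (x i) 0⌋₊ : ℝ) := fun i =>
    ((sub_le_sub_right (le_max_left _ _) 1).trans_lt (Nat.sub_one_lt_floor _)).le
  refine ⟨fun i => ⟨⌊max (x i) 0⌋₊, (Nat.floor_lt (le_max_right _ _)).2
    ((hmax_le i).trans_lt (hx i))⟩, mem_filter.2 ⟨mem_univ _, ?_⟩,
    fun i => (Nat.floor_le (le_max_right _ _)).trans (hmax_le i)⟩
  have := sum_le_sum fun i (_ : i ∈ univ) => hfloor i
  simp only [sum_sub_distrib, sum_const, card_univ, nsmul_eq_mul, mul_one] at this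
  linarith

end

lemma exp_neg_mul_sum_rpow_le {ι : Type*} (s : Finset ι) {k : ι → ℝ} (hk : ∀ i ∈ s, 0 ≤ k i)
    {lam α t : ℝ} (hlam : 0 ≤ lam) (hα : 1 ≤ α) (ht : 0 ≤ t) (htk : t ≤ ∑ i ∈ s, k i) :
    Real.exp (-lam * ∑ i ∈ s, k i ^ α) ≤ Real.exp (-lam * t ^ α / (#s : ℝ) ^ (α - 1)) := by
  rw [Real.exp_le_exp, neg_mul, neg_mul, neg_div, neg_le_neg_iff, mul_div_assoc]
  refine mul_le_mul_of_nonneg_left (div_le_of_le_mul₀ (by positivity)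
    (sum_nonneg fun i hi => Real.rpow_nonneg (hk i hi) _) ?_) hlam
  calc t ^ α ≤ (∑ i ∈ s, k i) ^ α := Real.rpow_le_rpow ht htk (by linarith)
    _ ≤ (#s : ℝ) ^ (α - 1) * ∑ i ∈ s, k i ^ α :=
      Real.rpow_sum_le_const_mul_sum_rpow_of_nonneg s hα hk
    _ = _ := mul_comm _ _

section

variable {Ω ι : Type*} [MeasurableSpace Ω] {P : Measure Ω} [Fintype ι] {X : ι → Ω → ℝ}

lemma measureReal_le_sum_le_add_sum_latticeProfiles [IsFiniteMeasure P] [DecidableEq ι]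
    (s : ℝ) (n : ℕ) :
    P.real {ω | s ≤ ∑ i, X i ω} ≤ ∑ i, P.real {ω | (n : ℝ) ≤ |X i ω|} +
      ∑ k ∈ latticeProfiles ι n (s - Fintype.card ι),
        P.real (⋂ i, {ω | ((k i : ℕ) : ℝ) ≤ |X i ω|}) := by
  refine (measureReal_mono ?_).trans ((measureReal_union_le _ _).trans
    (add_le_add (measureReal_iUnion_fintype_le _) (measureReal_biUnion_finset_le _ _)))
  intro ω hω
  by_cases hbig : ∃ i, (n : ℝ) ≤ |X i ω|
  · exact Or.inl (Set.mem_iUnion.2 hbig)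
  · push Not at hbig
    obtain ⟨k, hk, hk_le⟩ := exists_mem_latticeProfiles_le_abs hω hbig
    exact Or.inr (Set.mem_biUnion hk (Set.mem_iInter.2 hk_le))

lemma ProbabilityTheory.iIndepFun.measureReal_iInter_le_abs_le (hindep : iIndepFun X P)
    {c lam α : ℝ}
    (htail : ∀ i, ∀ x : ℝ, 0 ≤ x → P.real {ω | x ≤ |X i ω|} ≤ c * Real.exp (-lam * x ^ α))
    {k : ι → ℝ} (hk : ∀ i, 0 ≤ k i) :
    P.real (⋂ i, {ω | k i ≤ |X i ω|}) ≤ c ^ Fintype.card ι * Real.exp (-lam * ∑ i, k i ^ α) := by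
  rw [measureReal_def, hindep.meas_iInter (s := fun i => {ω | k i ≤ |X i ω|})
    fun i => ⟨{x | k i ≤ |x|}, measurableSet_le measurable_const measurable_abs, rfl⟩,
    ENNReal.toReal_prod]
  calc ∏ i, (P {ω | k i ≤ |X i ω|}).toReal ≤ ∏ i, c * Real.exp (-lam * k i ^ α) :=
        prod_le_prod (fun _ _ => ENNReal.toReal_nonneg) fun i _ => htail i _ (hk i)
    _ = c ^ Fintype.card ι * Real.exp (-lam * ∑ i, k i ^ α) := by
        rw [prod_mul_distrib, prod_const, card_univ, ← Real.exp_sum, mul_sum]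

end

theorem weibull_sum_tail_bound_general
    {Ω : Type*} [MeasurableSpace Ω] (P : Measure Ω) [IsProbabilityMeasure P]
    (tn : ℕ) (X : Fin tn → Ω → ℝ)
    (hindep : iIndepFun X P)
    (c lam α : ℝ) (hc : 1 ≤ c) (hlam : 0 < lam) (hα : 1 < α)
    (htail : ∀ i, ∀ x : ℝ, 0 ≤ x →
      (P {ω | x ≤ |X i ω|}).toReal ≤ c * Real.exp (-lam * x ^ α))
    (a : ℝ) (n : ℕ) (hn : (tn : ℝ) ≤ a * Real.sqrt n) :
    (P {ω | a * Real.sqrt n ≤ ∑ i, X i ω}).toReal ≤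
      c * tn * Real.exp (-lam * (n : ℝ) ^ α) +
        (c * n) ^ tn *
          Real.exp (-lam * (a * Real.sqrt n - tn) ^ α / (tn : ℝ) ^ (α - 1)) := by
  set s := a * Real.sqrt n
  set S := latticeProfiles (Fin tn) n (s - tn)
  set B := fun k : Fin tn → Fin n => ⋂ i, {ω | ((k i : ℕ) : ℝ) ≤ |X i ω|}
  set E := Real.exp (-lam * (s - tn) ^ α / (tn : ℝ) ^ (α - 1))
  have hprofile : ∀ k ∈ S, P.real (B k) ≤ c ^ tn * E := fun k hk => by
    simpa only [Fintype.card_fin, card_univ] using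
      (hindep.measureReal_iInter_le_abs_le htail fun i => Nat.cast_nonneg (k i : ℕ)).trans
        (mul_le_mul_of_nonneg_left (exp_neg_mul_sum_rpow_le univ
          (fun i _ => Nat.cast_nonneg (k i : ℕ)) hlam.le hα.le (sub_nonneg.2 hn)
          (mem_filter.1 hk).2) (by positivity))
  have hcard : (#S : ℝ) ≤ n ^ tn := by
    exact_mod_cast (card_latticeProfiles_le (ι := Fin tn) n _).trans_eq (by rw [Fintype.card_fin])
  calc P.real {ω | s ≤ ∑ i, X i ω}
      ≤ ∑ i, P.real {ω | (n : ℝ) ≤ |X i ω|} + ∑ k ∈ S, P.real (B k) := by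
        simpa only [Fintype.card_fin] using
          measureReal_le_sum_le_add_sum_latticeProfiles (X := X) s n
    _ ≤ ∑ _i : Fin tn, c * Real.exp (-lam * (n : ℝ) ^ α) + ∑ _k ∈ S, c ^ tn * E :=
        add_le_add (sum_le_sum fun i _ => htail i n (Nat.cast_nonneg n)) (sum_le_sum hprofile)
    _ = tn * (c * Real.exp (-lam * (n : ℝ) ^ α)) + #S * (c ^ tn * E) := by
        simp only [sum_const, card_univ, Fintype.card_fin, nsmul_eq_mul]
    _ ≤ tn * (c * Real.exp (-lam * (n : ℝ) ^ α)) + n ^ tn * (c ^ tn * E) := by gcongr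
    _ = c * tn * Real.exp (-lam * (n : ℝ) ^ α) + (c * n) ^ tn * E := by ring

theorem weibull_sum_tail_bound
    {Ω : Type*} [MeasurableSpace Ω] (P : Measure Ω) [IsProbabilityMeasure P]
    (tn : ℕ) (htn : 0 < tn) (X : Fin tn → Ω → ℝ)
    (hmeas : ∀ i, Measurable (X i))
    (hindep : iIndepFun X P)
    (hident : ∀ i j, Measure.map (X i) P = Measure.map (X j) P)
    (c lam α : ℝ) (hc : 1 ≤ c) (hlam : 0 < lam) (hα : 1 < α)
    (htail : ∀ i, ∀ x : ℝ, 0 ≤ x →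
      (P {ω | x ≤ |X i ω|}).toReal ≤ c * Real.exp (-lam * x ^ α))
    (a : ℝ) (ha : 0 < a) (n : ℕ) (hn : (tn : ℝ) ≤ a * Real.sqrt n) :
    (P {ω | a * Real.sqrt n ≤ ∑ i, X i ω}).toReal ≤
      c * tn * Real.exp (-lam * (n : ℝ) ^ α) +
        (c * n) ^ tn *
          Real.exp (-lam * (a * Real.sqrt n - tn) ^ α / (tn : ℝ) ^ (α - 1)) :=
  weibull_sum_tail_bound_general P tn X hindep c lam α hc hlam hα htail a n hn
end

section
/- Let ν be the standard Gaussian measure on ℝ and A a nonempty finite union of intervals with p ∈ (0,1). Define J_A(p) = inf{y ∈ [0,1] : sup_{x∈ℝ} ν((A-x)/√(1-y)) ≥ p}. Then 0 ≤ J_A(p) < 1, and there exist x ∈ ℝ and r ∈ [0,1) with r = J_A(p) and ν((A-x)/√(1-r)) ≥ p. -/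
/-!
A set in the algebra generated by the half-lines `(-∞, x]` is a finite union of intervals, so it
contains a nondegenerate interval and is either bounded or contains a half-line. Centring a
nondegenerate interval and shrinking the scale `√(1 - y)` makes the Gaussian mass as close to `1`
as we like, so some `y < 1` reaches the level `p` and `J < 1`. If `A` contains a half-line, the
level is already reached at `y = 0` by translating. If `A ⊆ [lo, hi]`, translates with `x` far
outside `[lo, hi]` carry mass `< p`, so only `x` in a compact interval `K` matter; since
`(x, y) ↦ ν((A - x) / √(1 - y))` is jointly continuous for `y < 1` (dominated convergence on the
Gaussian densities), the set of `y ∈ [0, c]` reaching `p` at some `x ∈ K` is compact, and its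
least element is `J`.
-/

open MeasureTheory ProbabilityTheory Set Filter Topology Real
open scoped NNReal

theorem eventually_mem_or_eventually_notMem_of_mem_generateSetAlgebra {α : Type*}
    {𝒜 : Set (Set α)} {l : Filter α}
    (h𝒜 : ∀ s ∈ 𝒜, (∀ᶠ x in l, x ∈ s) ∨ ∀ᶠ x in l, x ∉ s) {A : Set α}
    (hA : A ∈ generateSetAlgebra 𝒜) : (∀ᶠ x in l, x ∈ A) ∨ ∀ᶠ x in l, x ∉ A := by
  induction hA with
  | base s hs => exact h𝒜 s hs
  | empty => exact .inr (.of_forall fun _ => id)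
  | compl s _ ih => simpa only [mem_compl_iff, not_not] using ih.symm
  | union s t _ _ ihs iht =>
    simp only [mem_union, not_or]
    rcases ihs with hs | hs
    · exact .inl (hs.mono fun _ => .inl)
    rcases iht with ht | ht
    · exact .inl (ht.mono fun _ => .inr)
    · exact .inr (hs.and ht)

theorem measurableSet_of_mem_generateSetAlgebra_Iic {A : Set ℝ}
    (hA : A ∈ generateSetAlgebra {s : Set ℝ | ∃ x, s = Iic x}) : MeasurableSet A := by
  induction hA with
  | base s hs => obtain ⟨x, rfl⟩ := hs; exact measurableSet_Iic
  | empty => exact .empty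
  | compl s _ ih => exact ih.compl
  | union s t _ _ ihs iht => exact ihs.union iht

theorem exists_Ioo_subset_of_mem_generateSetAlgebra_Iic {A : Set ℝ}
    (hA : A ∈ generateSetAlgebra {s : Set ℝ | ∃ x, s = Iic x}) (hne : A.Nonempty) :
    ∃ a b, a < b ∧ Ioo a b ⊆ A := by
  obtain ⟨x, hx⟩ := hne
  have hIic : ∀ s ∈ {s : Set ℝ | ∃ x, s = Iic x},
      (∀ᶠ z in 𝓝[≤] x, z ∈ s) ∨ ∀ᶠ z in 𝓝[≤] x, z ∉ s := by
    rintro _ ⟨c, rfl⟩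
    rcases le_or_gt x c with hxc | hcx
    · exact .inl (eventually_nhdsWithin_of_forall fun z hz => le_trans hz hxc)
    · exact .inr ((eventually_gt_nhds hcx).filter_mono nhdsWithin_le_nhds |>.mono
        fun z hz => not_le.2 hz)
  rcases eventually_mem_or_eventually_notMem_of_mem_generateSetAlgebra hIic hA with h | h
  · obtain ⟨a, ha, hsub⟩ := mem_nhdsLE_iff_exists_Ioc_subset.1 h
    exact ⟨a, x, ha, Ioo_subset_Ioc_self.trans hsub⟩
  · exact absurd hx (h.self_of_nhdsWithin self_mem_Iic)

theorem subset_Icc_or_Iic_subset_or_Ici_subset_of_mem_generateSetAlgebra_Iic {A : Set ℝ}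
    (hA : A ∈ generateSetAlgebra {s : Set ℝ | ∃ x, s = Iic x}) :
    (∃ lo hi, A ⊆ Icc lo hi) ∨ ∃ a, Iic a ⊆ A ∨ Ici a ⊆ A := by
  have hbot := eventually_mem_or_eventually_notMem_of_mem_generateSetAlgebra
    (l := atBot) (by rintro _ ⟨c, rfl⟩; exact .inl (eventually_le_atBot c)) hA
  have htop := eventually_mem_or_eventually_notMem_of_mem_generateSetAlgebra
    (l := atTop) (by rintro _ ⟨c, rfl⟩; exact .inr ((eventually_gt_atTop c).mono
      fun z hz => not_le.2 hz)) hA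
  rcases hbot with h | h
  · obtain ⟨a, ha⟩ := eventually_atBot.1 h
    exact .inr ⟨a, .inl ha⟩
  rcases htop with h' | h'
  · obtain ⟨a, ha⟩ := eventually_atTop.1 h'
    exact .inr ⟨a, .inr ha⟩
  obtain ⟨lo, hlo⟩ := eventually_atBot.1 h
  obtain ⟨hi, hhi⟩ := eventually_atTop.1 h'
  refine .inl ⟨lo, hi, fun z hz => ⟨?_, ?_⟩⟩
  · by_contra hz'; exact hlo z (not_le.1 hz').le hz
  · by_contra hz'; exact hhi z (not_le.1 hz').le hz

theorem tendsto_measureReal_Ioo_neg_atTop (μ : Measure ℝ) [IsProbabilityMeasure μ] :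
    Tendsto (fun t => μ.real (Ioo (-t) t)) atTop (𝓝 1) := by
  have hmono : Monotone fun t : ℝ => Ioo (-t) t := fun s t hst =>
    Ioo_subset_Ioo (neg_le_neg hst) hst
  have hunion : (⋃ t : ℝ, Ioo (-t) t) = univ :=
    eq_univ_of_forall fun z => mem_iUnion.2 ⟨|z| + 1, by
      constructor <;> linarith [neg_abs_le z, le_abs_self z]⟩
  have h := tendsto_measure_iUnion_atTop (μ := μ) hmono
  rw [hunion, measure_univ] at h
  simpa only [Function.comp_def, measureReal_def, ENNReal.toReal_one] using
    (ENNReal.tendsto_toReal ENNReal.one_ne_top).comp h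

theorem gaussianPDFReal_le_mul_exp {m₀ m : ℝ} {v₀ v : ℝ≥0} (hv₀ : 0 < v₀)
    (hm : |m - m₀| ≤ 1) (hv : (v₀ : ℝ) / 2 ≤ v) (hv' : (v : ℝ) ≤ 2 * v₀) (z : ℝ) :
    gaussianPDFReal m v z ≤
      (√(π * v₀))⁻¹ * rexp (1 / (4 * v₀)) * rexp (-(8 * (v₀ : ℝ))⁻¹ * (z - m₀) ^ 2) := by
  have hmsq : (m - m₀) ^ 2 ≤ 1 := by nlinarith [sq_abs (m - m₀), abs_nonneg (m - m₀)]
  have hsq : (z - m₀) ^ 2 ≤ 2 * (z - m) ^ 2 + 2 := by nlinarith [sq_nonneg (z - m - (m - m₀))]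
  rw [gaussianPDFReal, mul_assoc (√(π * v₀))⁻¹, ← Real.exp_add]
  have hinv : (√(2 * π * v))⁻¹ ≤ (√(π * v₀))⁻¹ :=
    inv_anti₀ (by positivity) (Real.sqrt_le_sqrt (by nlinarith [pi_pos]))
  have hexp : -(z - m) ^ 2 / (2 * v) ≤ 1 / (4 * v₀) + -(8 * (v₀ : ℝ))⁻¹ * (z - m₀) ^ 2 :=
    calc -(z - m) ^ 2 / (2 * v) ≤ -(z - m) ^ 2 / (4 * v₀) := by
          rw [neg_div, neg_div, neg_le_neg_iff]
          exact div_le_div_of_nonneg_left (sq_nonneg _) (by linarith) (by linarith)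
      _ ≤ 1 / (4 * v₀) + -(8 * (v₀ : ℝ))⁻¹ * (z - m₀) ^ 2 := by
          field_simp
          linarith
  exact mul_le_mul hinv (exp_le_exp.2 hexp) (exp_pos _).le (by positivity)

theorem gaussianReal_real_apply_eq_integral (m : ℝ) {v : ℝ≥0} (hv : v ≠ 0) (A : Set ℝ) :
    (gaussianReal m v).real A = ∫ z in A, gaussianPDFReal m v z := by
  rw [measureReal_def, gaussianReal_apply_eq_integral _ hv,
    ENNReal.toReal_ofReal (integral_nonneg fun z => gaussianPDFReal_nonneg _ _ _)]

theorem continuousAt_gaussianReal_real_apply (A : Set ℝ) (m₀ : ℝ) {v₀ : ℝ≥0} (hv₀ : v₀ ≠ 0) :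
    ContinuousAt (fun q : ℝ × ℝ≥0 => (gaussianReal q.1 q.2).real A) (m₀, v₀) := by
  have hv₀' : 0 < v₀ := pos_iff_ne_zero.2 hv₀
  have hne : ∀ᶠ q : ℝ × ℝ≥0 in 𝓝 (m₀, v₀), q.2 ≠ 0 :=
    continuousAt_snd.eventually_ne hv₀
  refine ContinuousAt.congr ?_
    (hne.mono fun q hq => (gaussianReal_real_apply_eq_integral q.1 hq A).symm)
  have hm : ∀ᶠ q : ℝ × ℝ≥0 in 𝓝 (m₀, v₀), |q.1 - m₀| ≤ 1 :=
    (continuous_fst.tendsto (m₀, v₀)).eventually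
      ((eventually_abs_sub_lt m₀ one_pos).mono fun _ h => h.le)
  have hv : ∀ᶠ q : ℝ × ℝ≥0 in 𝓝 (m₀, v₀), ((q.2 : ℝ) ∈ Icc ((v₀ : ℝ) / 2) (2 * v₀)) :=
    (continuous_snd.tendsto (m₀, v₀)).eventually ((NNReal.continuous_coe.tendsto v₀).eventually
      (Icc_mem_nhds (by linarith [NNReal.coe_pos.2 hv₀']) (by linarith [NNReal.coe_pos.2 hv₀'])))
  refine continuousAt_of_dominated
    (bound := fun z => (√(π * v₀))⁻¹ * rexp (1 / (4 * v₀)) *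
      rexp (-(8 * (v₀ : ℝ))⁻¹ * (z - m₀) ^ 2)) ?_ ?_ ?_ ?_
  · exact .of_forall fun q => (measurable_gaussianPDFReal _ _).aestronglyMeasurable
  · filter_upwards [hm, hv] with q hqm hqv
    refine .of_forall fun z => ?_
    rw [Real.norm_of_nonneg (gaussianPDFReal_nonneg _ _ _)]
    exact gaussianPDFReal_le_mul_exp hv₀' hqm hqv.1 hqv.2 z
  · exact (((integrable_exp_neg_mul_sq (by positivity)).comp_sub_right m₀).const_mul
      _).integrableOn
  · refine .of_forall fun z => ?_
    simp only [gaussianPDFReal]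
    have : (v₀ : ℝ) ≠ 0 := NNReal.coe_ne_zero.2 hv₀
    fun_prop (disch := positivity)

theorem gaussianReal_map_const_add_const_mul (x s : ℝ) :
    (gaussianReal 0 1).map (fun w => x + s * w) = gaussianReal x (s ^ 2).toNNReal := by
  have hcomp : (fun w => x + s * w) = (x + ·) ∘ (s * ·) := rfl
  rw [hcomp, ← Measure.map_map (measurable_const_add x) (measurable_const_mul s),
    gaussianReal_map_const_mul, gaussianReal_map_const_add, mul_zero, zero_add, mul_one,
    Real.toNNReal_of_nonneg (sq_nonneg s)]

theorem image_sub_div_eq_preimage (A : Set ℝ) (x : ℝ) {s : ℝ} (hs : s ≠ 0) :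
    (fun z => (z - x) / s) '' A = (fun w => x + s * w) ⁻¹' A := by
  ext w
  constructor
  · rintro ⟨z, hz, rfl⟩
    simpa [mul_div_cancel₀ _ hs] using hz
  · exact fun hw => ⟨x + s * w, hw, by field_simp; ring⟩

noncomputable def shiftedMass (A : Set ℝ) (x y : ℝ) : ℝ :=
  ((gaussianReal 0 1) ((fun z => (z - x) / √(1 - y)) '' A)).toReal

def reachSet (A : Set ℝ) (p : ℝ) : Set ℝ :=
  {y | y ∈ Icc 0 1 ∧ p ≤ sSup (range fun x => shiftedMass A x y)}

theorem shiftedMass_eq {A : Set ℝ} (hA : MeasurableSet A) (x : ℝ) {y : ℝ} (hy : y < 1) :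
    shiftedMass A x y = (gaussianReal x (1 - y).toNNReal).real A := by
  rw [shiftedMass, image_sub_div_eq_preimage A x (Real.sqrt_pos.2 (sub_pos.2 hy)).ne',
    ← Measure.map_apply (by fun_prop) hA, gaussianReal_map_const_add_const_mul,
    Real.sq_sqrt (sub_pos.2 hy).le]
  rfl

theorem continuousOn_shiftedMass {A : Set ℝ} (hA : MeasurableSet A) :
    ContinuousOn (fun q : ℝ × ℝ => shiftedMass A q.1 q.2) {q | q.2 < 1} := by
  intro q hq
  have hcont : ContinuousAt (fun q : ℝ × ℝ => (gaussianReal q.1 (1 - q.2).toNNReal).real A) q :=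
    (continuousAt_gaussianReal_real_apply A q.1 (Real.toNNReal_pos.2 (sub_pos.2 hq)).ne').comp
      (f := fun q : ℝ × ℝ => (q.1, (1 - q.2).toNNReal)) (by fun_prop)
  refine (hcont.congr ?_).continuousWithinAt
  filter_upwards [(isOpen_lt continuous_snd continuous_const).mem_nhds hq] with q' hq'
  exact (shiftedMass_eq hA q'.1 hq').symm

theorem measureReal_Ioo_le_shiftedMass {A : Set ℝ} {x y t : ℝ} (hy : y < 1)
    (h : ∀ w ∈ Ioo (-t) t, x + √(1 - y) * w ∈ A) :
    (gaussianReal 0 1).real (Ioo (-t) t) ≤ shiftedMass A x y := by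
  rw [shiftedMass, image_sub_div_eq_preimage A x (Real.sqrt_pos.2 (sub_pos.2 hy)).ne']
  exact measureReal_mono h

theorem shiftedMass_le_of_notMem_Icc {A : Set ℝ} {lo hi T x y : ℝ} (hA : A ⊆ Icc lo hi)
    (hy₀ : 0 ≤ y) (hy : y < 1) (hx : x ∉ Icc (lo - T) (hi + T)) :
    shiftedMass A x y ≤ (gaussianReal 0 1).real (Ioo (-T) T)ᶜ := by
  have hs : 0 < √(1 - y) := Real.sqrt_pos.2 (sub_pos.2 hy)
  have hs1 : √(1 - y) ≤ 1 := Real.sqrt_le_one.2 (by linarith)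
  refine measureReal_mono ?_
  rintro _ ⟨z, hz, rfl⟩ hw
  have hzx : |z - x| < T :=
    calc |z - x| = √(1 - y) * |(z - x) / √(1 - y)| := by
          rw [abs_div, abs_of_pos hs, mul_div_cancel₀ _ hs.ne']
      _ ≤ 1 * |(z - x) / √(1 - y)| := by gcongr
      _ < T := by rw [one_mul]; exact abs_lt.2 hw
  obtain ⟨hlo, hhi⟩ := hA hz
  obtain ⟨h₁, h₂⟩ := abs_lt.1 hzx
  exact hx ⟨by linarith, by linarith⟩

theorem mem_reachSet {A : Set ℝ} {p x y : ℝ} (hy : y ∈ Icc 0 1) (h : p ≤ shiftedMass A x y) :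
    y ∈ reachSet A p :=
  ⟨hy, h.trans (le_csSup ⟨1, by rintro _ ⟨x', rfl⟩; exact measureReal_le_one⟩ (mem_range_self x))⟩

theorem IsCompact.exists_mem_le_of_le_sSup_range {X : Type*} [TopologicalSpace X] {f : X → ℝ}
    {K : Set X} {p q : ℝ} (hK : IsCompact K) (hKne : K.Nonempty) (hf : ContinuousOn f K)
    (hq : q < p) (hout : ∀ x ∉ K, f x ≤ q) (hp : p ≤ sSup (range f)) : ∃ x ∈ K, p ≤ f x := by
  obtain ⟨x₀, hx₀, hmax⟩ := hK.exists_isMaxOn hKne hf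
  have hsup : sSup (range f) ≤ max (f x₀) q := by
    refine csSup_le ⟨_, mem_range_self x₀⟩ ?_
    rintro _ ⟨x, rfl⟩
    by_cases hx : x ∈ K
    exacts [le_max_of_le_left (hmax hx), le_max_of_le_right (hout x hx)]
  exact ⟨x₀, hx₀, (le_max_iff.1 (hp.trans hsup)).resolve_right hq.not_ge⟩

theorem isCompact_setOf_exists_le {X Y : Type*} [TopologicalSpace X] [TopologicalSpace Y]
    [T2Space X] [T2Space Y] {f : X × Y → ℝ} {K : Set X} {L : Set Y} (hK : IsCompact K)
    (hL : IsCompact L) (hf : ContinuousOn f (K ×ˢ L)) (p : ℝ) :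
    IsCompact {y ∈ L | ∃ x ∈ K, p ≤ f (x, y)} := by
  have hC : IsCompact (K ×ˢ L ∩ f ⁻¹' Ici p) :=
    (hK.prod hL).of_isClosed_subset
      (hf.preimage_isClosed_of_isClosed (hK.prod hL).isClosed isClosed_Ici) inter_subset_left
  convert hC.image continuous_snd using 1
  ext y
  constructor
  · rintro ⟨hy, x, hx, hxy⟩
    exact ⟨(x, y), ⟨⟨hx, hy⟩, hxy⟩, rfl⟩
  · rintro ⟨⟨x, y⟩, ⟨⟨hx, hy⟩, hxy⟩, rfl⟩
    exact ⟨hy, x, hx, hxy⟩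

theorem exists_le_shiftedMass_of_Ioo_subset {A : Set ℝ} {a b p : ℝ} (hab : a < b)
    (hA : Ioo a b ⊆ A) (hp : p < 1) : ∃ c ∈ Ico (0 : ℝ) 1, ∃ x, p ≤ shiftedMass A x c := by
  obtain ⟨δ, hδ⟩ : ∃ δ, δ = (b - a) / 2 := ⟨_, rfl⟩
  obtain ⟨t, ht, hδt⟩ := ((tendsto_measureReal_Ioo_neg_atTop (gaussianReal 0 1)).eventually
    (eventually_ge_nhds hp) |>.and (eventually_gt_atTop δ)).exists
  have hδ₀ : 0 < δ := by rw [hδ]; linarith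
  have ht₀ : 0 < t := hδ₀.trans hδt
  obtain ⟨s, hs⟩ : ∃ s, s = δ / t := ⟨_, rfl⟩
  have hs₀ : 0 < s := hs ▸ div_pos hδ₀ ht₀
  have hs₁ : s < 1 := hs ▸ (div_lt_one ht₀).2 hδt
  have hst : s * t = δ := hs ▸ div_mul_cancel₀ _ ht₀.ne'
  refine ⟨1 - s ^ 2, ⟨by nlinarith, by nlinarith⟩, (a + b) / 2,
    ht.trans (measureReal_Ioo_le_shiftedMass (by nlinarith) fun w hw => hA ?_)⟩
  rw [sub_sub_cancel, Real.sqrt_sq hs₀.le]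
  have h₁ := mul_lt_mul_of_pos_left hw.1 hs₀
  have h₂ := mul_lt_mul_of_pos_left hw.2 hs₀
  constructor <;> linarith

theorem exists_le_shiftedMass_zero_of_Iic_subset_or_Ici_subset {A : Set ℝ} {a p : ℝ}
    (hA : Iic a ⊆ A ∨ Ici a ⊆ A) (hp : p < 1) : ∃ x, p ≤ shiftedMass A x 0 := by
  obtain ⟨t, ht⟩ := ((tendsto_measureReal_Ioo_neg_atTop (gaussianReal 0 1)).eventually
    (eventually_ge_nhds hp)).exists
  have hsqrt : √(1 - 0 : ℝ) = 1 := by norm_num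
  rcases hA with hA | hA
  · refine ⟨a - t, ht.trans (measureReal_Ioo_le_shiftedMass one_pos fun w hw => hA ?_)⟩
    rw [hsqrt, one_mul, mem_Iic]
    linarith [hw.2]
  · refine ⟨a + t, ht.trans (measureReal_Ioo_le_shiftedMass one_pos fun w hw => hA ?_)⟩
    rw [hsqrt, one_mul, mem_Ici]
    linarith [hw.1]

theorem exists_isLeast_reachSet_of_subset_Icc {A : Set ℝ} {lo hi p c x₁ : ℝ}
    (hAm : MeasurableSet A) (hA : A ⊆ Icc lo hi) (hp : 0 < p) (hc : c ∈ Ico (0 : ℝ) 1)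
    (hcx₁ : p ≤ shiftedMass A x₁ c) :
    ∃ r x, IsLeast (reachSet A p) r ∧ p ≤ shiftedMass A x r := by
  obtain ⟨T, hT⟩ := ((tendsto_measureReal_Ioo_neg_atTop (gaussianReal 0 1)).eventually
    (eventually_gt_nhds (by linarith : 1 - p < 1))).exists
  have htail : (gaussianReal 0 1).real (Ioo (-T) T)ᶜ < p := by
    rw [probReal_compl_eq_one_sub measurableSet_Ioo]
    linarith
  set K := Icc (lo - T) (hi + T)
  have hout : ∀ y ∈ Icc 0 c, ∀ x ∉ K,
      shiftedMass A x y ≤ (gaussianReal 0 1).real (Ioo (-T) T)ᶜ :=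
    fun y hy x hx => shiftedMass_le_of_notMem_Icc hA hy.1 (hy.2.trans_lt hc.2) hx
  have hcont : ContinuousOn (fun q : ℝ × ℝ => shiftedMass A q.1 q.2) (K ×ˢ Icc 0 c) :=
    (continuousOn_shiftedMass hAm).mono fun q hq => hq.2.2.trans_lt hc.2
  have hx₁ : x₁ ∈ K := by
    by_contra hx₁
    exact (hcx₁.trans (hout c ⟨hc.1, le_rfl⟩ x₁ hx₁)).not_gt htail
  set L := {y ∈ Icc 0 c | ∃ x ∈ K, p ≤ shiftedMass A x y}
  have hL : IsCompact L := isCompact_setOf_exists_le isCompact_Icc isCompact_Icc hcont p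
  obtain ⟨⟨hr₀, hrc⟩, x, -, hx⟩ := hL.sInf_mem ⟨c, ⟨hc.1, le_rfl⟩, x₁, hx₁, hcx₁⟩
  refine ⟨sInf L, x, ⟨mem_reachSet ⟨hr₀, hrc.trans hc.2.le⟩ hx, fun y hy => ?_⟩, hx⟩
  rcases le_or_gt y c with hyc | hcy
  · have hyc' : y ∈ Icc 0 c := ⟨hy.1.1, hyc⟩
    have hf : ContinuousOn (fun x => shiftedMass A x y) K :=
      hcont.comp (f := fun x => (x, y)) (by fun_prop) fun x hx => mk_mem_prod hx hyc'
    exact csInf_le hL.bddBelow ⟨hyc', isCompact_Icc.exists_mem_le_of_le_sSup_range ⟨x₁, hx₁⟩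
      hf htail (hout y hyc') hy.2⟩
  · exact hrc.trans hcy.le

theorem JA_attained
    (A : Set ℝ)
    (hA : A ∈ MeasureTheory.generateSetAlgebra {s : Set ℝ | ∃ x, s = Set.Iic x})
    (hAne : A.Nonempty)
    (p : ℝ) (hp : 0 < p) (hp1 : p < 1)
    (J : ℝ)
    (hJ : J = sInf {y : ℝ | y ∈ Set.Icc (0:ℝ) 1 ∧
      p ≤ sSup (Set.range (fun x : ℝ =>
        ((gaussianReal 0 1)
          ((fun z => (z - x) / Real.sqrt (1 - y)) '' A)).toReal))}) :
    0 ≤ J ∧ J < 1 ∧ ∃ (x r : ℝ), r ∈ Set.Ico (0:ℝ) 1 ∧ r = J ∧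
      p ≤ ((gaussianReal 0 1)
        ((fun z => (z - x) / Real.sqrt (1 - r)) '' A)).toReal := by
  change J = sInf (reachSet A p) at hJ
  obtain ⟨a, b, hab, hIoo⟩ := exists_Ioo_subset_of_mem_generateSetAlgebra_Iic hA hAne
  obtain ⟨c, hc, x₁, hcx₁⟩ := exists_le_shiftedMass_of_Ioo_subset hab hIoo hp1
  obtain ⟨r, x, hr, hrx⟩ : ∃ r x, IsLeast (reachSet A p) r ∧ p ≤ shiftedMass A x r := by
    rcases subset_Icc_or_Iic_subset_or_Ici_subset_of_mem_generateSetAlgebra_Iic hA with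
      ⟨lo, hi, hbdd⟩ | ⟨d, hhalf⟩
    · exact exists_isLeast_reachSet_of_subset_Icc
        (measurableSet_of_mem_generateSetAlgebra_Iic hA) hbdd hp hc hcx₁
    · obtain ⟨x, hx⟩ := exists_le_shiftedMass_zero_of_Iic_subset_or_Ici_subset hhalf hp1
      exact ⟨0, x, ⟨mem_reachSet ⟨le_rfl, zero_le_one⟩ hx, fun y hy => hy.1.1⟩, hx⟩
  have hr₁ : r < 1 := (hr.2 (mem_reachSet (Ico_subset_Icc_self hc) hcx₁)).trans_lt hc.2
  obtain rfl : J = r := hJ.trans hr.csInf_eq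
  exact ⟨hr.1.1.1, hr₁, x, J, ⟨hr.1.1.1, hr₁⟩, rfl, hrx⟩
end

section
/- Let b, d be integers with 2 ≤ b < d, α > 1, and set Υ = 2(log b)(log d)/(α(log d - log b)). With t_n = ⌊(α/(2 log b)) log n - (2α/log b) log log n⌋ and s_n = ⌊(log log n + t_n log b)/log d⌋, one has as n → ∞: n^{α/2}/(t_n - s_n)^{α-1} = (1 + o(1)) Υ^{α-1} n^{α/2}/(log n)^{α-1}, and d^{s_n} = o(n^{α/2}/(t_n - s_n)^{α-1}) and b^{t_n} = o(d^{s_n}). -/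
/-!
Write `L = log n`. Both scales are floors, so `t n = α L / (2 log b) + O(log L)` and
`s n = (log L + t n log b) / log d + O(1)`; hence `t n - s n = L / Υ + o(L)`, which gives the first
claim. The floor defining `s n` also traps `d ^ s n` between `L b ^ t n / d` and `L b ^ t n`. The
upper bound is at most `n ^ (α/2) L ^ (1 - 2α)`, smaller than `n ^ (α/2) / (t n - s n) ^ (α-1)`
by a factor of order `L ^ (-α)`; the lower bound gives `b ^ t n / d ^ s n ≤ d / L`.
-/

open Filter Real Topology Asymptotics

section
variable {ι : Type*} {l : Filter ι}

theorem isLittleO_fract {L : ι → ℝ} (hL : Tendsto L l atTop) (z : ι → ℝ) :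
    (fun i => Int.fract (z i)) =o[l] L := by
  have hbdd : (fun i => Int.fract (z i)) =O[l] (fun _ => (1 : ℝ)) :=
    IsBigO.of_bound 1 (Eventually.of_forall fun i => by
      simp [Int.abs_fract, (Int.fract_lt_one _).le])
  exact hbdd.trans_isLittleO <|
    (isLittleO_one_left_iff ℝ).2 (tendsto_abs_atTop_atTop.comp hL)

theorem tendsto_floor_sub_floor_div {x y L t s : ι → ℝ} {a p q : ℝ} (hq : q ≠ 0)
    (hL : Tendsto L l atTop) (hx : (fun i => x i - a * L i) =o[l] L) (hy : y =o[l] L)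
    (ht : ∀ i, t i = ⌊x i⌋) (hs : ∀ i, s i = ⌊(y i + t i * p) / q⌋) :
    Tendsto (fun i => (t i - s i) / L i) l (𝓝 ((1 - p / q) * a)) := by
  have hsplit : (fun i => t i - s i - (1 - p / q) * a * L i) = fun i =>
      -(1 - p / q) * Int.fract (x i) + (1 - p / q) * (x i - a * L i)
        + Int.fract ((y i + t i * p) / q) - q⁻¹ * y i := by
    ext i
    rw [← Int.self_sub_floor, ← Int.self_sub_floor, ← ht, ← hs]
    field_simp
    ring
  have ho : (fun i => t i - s i - (1 - p / q) * a * L i) =o[l] L := by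
    rw [hsplit]
    exact ((((isLittleO_fract hL _).const_mul_left _).add (hx.const_mul_left _)).add
      (isLittleO_fract hL _)).sub (hy.const_mul_left _)
  have hlim : Tendsto (fun i => (1 - p / q) * a + (t i - s i - (1 - p / q) * a * L i) / L i) l
      (𝓝 ((1 - p / q) * a)) := by
    simpa using ho.tendsto_div_nhds_zero.const_add ((1 - p / q) * a)
  refine hlim.congr' ?_
  filter_upwards [hL.eventually_gt_atTop 0] with i hi
  field_simp
  ring

theorem tendsto_div_rpow_div_mul_rpow {u L N : ι → ℝ} {c β : ℝ} (hc : 0 < c)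
    (hu : Tendsto (fun i => u i / L i) l (𝓝 c⁻¹)) (hL : ∀ᶠ i in l, 0 < L i)
    (hN : ∀ᶠ i in l, N i ≠ 0) :
    Tendsto (fun i => (N i / u i ^ β) / (c ^ β * N i / L i ^ β)) l (𝓝 1) := by
  have hcu : Tendsto (fun i => c * (u i / L i)) l (𝓝 1) := by
    simpa [hc.ne'] using hu.const_mul c
  have hpow : Tendsto (fun i => ((c * (u i / L i)) ^ β)⁻¹) l (𝓝 1) := by
    simpa using (((continuousAt_rpow_const 1 β (Or.inl one_ne_zero)).tendsto.comp hcu).inv₀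
      (by simp))
  refine hpow.congr' ?_
  filter_upwards [hL, hN, hcu.eventually (eventually_gt_nhds one_pos)] with i hLi hNi hci
  have hui : 0 < u i := (div_pos_iff_of_pos_right hLi).1 (pos_of_mul_pos_right hci hc.le)
  rw [mul_rpow hc.le (div_pos hui hLi).le, div_rpow hui.le hLi.le]
  have := rpow_pos_of_pos hc β
  have := rpow_pos_of_pos hui β
  have := rpow_pos_of_pos hLi β
  field_simp

theorem rpow_floor_div_log_le {d : ℝ} (hd : 1 < d) (z : ℝ) :
    d ^ (⌊z / log d⌋ : ℝ) ≤ exp z := by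
  rw [rpow_def_of_pos (by linarith), exp_le_exp, mul_comm, ← le_div_iff₀ (log_pos hd)]
  exact Int.floor_le _

theorem exp_div_lt_rpow_floor_div_log {d : ℝ} (hd : 1 < d) (z : ℝ) :
    exp z / d < d ^ (⌊z / log d⌋ : ℝ) := by
  have hd0 : 0 < d := by linarith
  rw [rpow_def_of_pos hd0, div_lt_iff₀ hd0, ← exp_log hd0, ← exp_add, exp_lt_exp,
    exp_log hd0, mul_comm, ← sub_lt_iff_lt_add, ← div_lt_iff₀ (log_pos hd), sub_div,
    div_self (log_pos hd).ne']
  exact Int.sub_one_lt_floor _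

theorem tendsto_div_div_rpow_of_le_mul_rpow {X N u L : ι → ℝ} {c β γ : ℝ} (hc : 0 < c)
    (hγ : 0 < γ) (hu : Tendsto (fun i => u i / L i) l (𝓝 c)) (hL : Tendsto L l atTop)
    (hN : ∀ᶠ i in l, 0 < N i) (hX0 : ∀ᶠ i in l, 0 ≤ X i)
    (hX : ∀ᶠ i in l, X i ≤ N i * L i ^ (-(β + γ))) :
    Tendsto (fun i => X i / (N i / u i ^ β)) l (𝓝 0) := by
  have hbound : Tendsto (fun i => L i ^ (-γ) * (u i / L i) ^ β) l (𝓝 0) := by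
    simpa using ((tendsto_rpow_neg_atTop hγ).comp hL).mul
      ((continuousAt_rpow_const c β (Or.inl hc.ne')).tendsto.comp hu)
  have hLpos := hL.eventually_gt_atTop 0
  have hupos : ∀ᶠ i in l, 0 < u i := by
    filter_upwards [hLpos, hu.eventually (eventually_gt_nhds hc)] with i hLi hui
    exact (div_pos_iff_of_pos_right hLi).1 hui
  refine tendsto_of_tendsto_of_tendsto_of_le_of_le' tendsto_const_nhds hbound ?_ ?_
  · filter_upwards [hX0, hN, hupos] with i hXi hNi hui
    have := rpow_pos_of_pos hui β
    positivity
  · filter_upwards [hX, hN, hupos, hLpos] with i hXi hNi hui hLi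
    have hLβ := rpow_pos_of_pos hLi β
    have huβ := rpow_pos_of_pos hui β
    calc X i / (N i / u i ^ β) = X i / N i * u i ^ β := by field_simp
      _ ≤ L i ^ (-(β + γ)) * u i ^ β := by
        gcongr
        rwa [div_le_iff₀ hNi, mul_comm]
      _ = L i ^ (-γ) * (u i / L i) ^ β := by
        rw [div_rpow hui.le hLi.le, neg_add, rpow_add hLi, rpow_neg hLi.le]
        field_simp

end

theorem scale_calibration
    (b d : ℕ) (hb : 2 ≤ b) (hbd : b < d) (α : ℝ) (hα : 1 < α)
    (t s : ℕ → ℝ) (Υ : ℝ)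
    (ht : ∀ n, t n = ⌊(α / (2 * Real.log b)) * Real.log n -
      (2 * α / Real.log b) * Real.log (Real.log n)⌋)
    (hs : ∀ n, s n = ⌊(Real.log (Real.log n) + t n * Real.log b) / Real.log d⌋)
    (hΥ : Υ = 2 * Real.log b * Real.log d / (α * (Real.log d - Real.log b))) :
    Tendsto (fun n : ℕ => ((n : ℝ) ^ (α / 2) / (t n - s n) ^ (α - 1)) /
        (Υ ^ (α - 1) * (n : ℝ) ^ (α / 2) / (Real.log n) ^ (α - 1)))
      atTop (nhds 1) ∧
    Tendsto (fun n : ℕ => (d : ℝ) ^ (s n) /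
        ((n : ℝ) ^ (α / 2) / (t n - s n) ^ (α - 1))) atTop (nhds 0) ∧
    Tendsto (fun n : ℕ => (b : ℝ) ^ (t n) / (d : ℝ) ^ (s n)) atTop (nhds 0) := by
  have hb1 : (1 : ℝ) < b := by exact_mod_cast hb
  have hd1 : (1 : ℝ) < d := by exact_mod_cast (one_lt_two.trans_le hb).trans hbd
  have hlb : 0 < log b := log_pos hb1
  have hld : 0 < log d := log_pos hd1
  have hlbd : log b < log d := log_lt_log (by linarith) (by exact_mod_cast hbd)
  have hΥ0 : 0 < Υ := by
    rw [hΥ]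
    exact div_pos (by positivity) (mul_pos (by linarith) (by linarith))
  have hL : Tendsto (fun n : ℕ => log (n : ℝ)) atTop atTop :=
    tendsto_log_atTop.comp tendsto_natCast_atTop_atTop
  have hLpos := hL.eventually_gt_atTop 0
  have hnpos : ∀ᶠ n : ℕ in atTop, (0 : ℝ) < n :=
    tendsto_natCast_atTop_atTop.eventually_gt_atTop 0
  have hgap : Tendsto (fun n => (t n - s n) / log n) atTop (𝓝 Υ⁻¹) := by
    have hM : (fun n : ℕ => log (log (n : ℝ))) =o[atTop] (fun n : ℕ => log (n : ℝ)) :=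
      isLittleO_log_id_atTop.comp_tendsto hL
    have hx : (fun n : ℕ => α / (2 * log b) * log n - 2 * α / log b * log (log n)
        - α / (2 * log b) * log n) =o[atTop] (fun n : ℕ => log (n : ℝ)) := by
      simpa [sub_eq_add_neg] using hM.const_mul_left (-(2 * α / log b))
    convert tendsto_floor_sub_floor_div hld.ne' hL hx hM ht hs using 2
    rw [hΥ]
    field_simp
  have hds : ∀ᶠ n : ℕ in atTop,
      (d : ℝ) ^ s n ≤ (n : ℝ) ^ (α / 2) * log n ^ (-((α - 1) + α)) := by
    filter_upwards [hnpos, hLpos] with n hn hLn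
    have htx : t n * log b ≤ α / 2 * log n - 2 * α * log (log n) := by
      rw [ht n]
      calc _ ≤ (α / (2 * log b) * log n - 2 * α / log b * log (log n)) * log b :=
            mul_le_mul_of_nonneg_right (Int.floor_le _) hlb.le
        _ = _ := by field_simp
    calc (d : ℝ) ^ s n ≤ exp (log (log n) + t n * log b) := hs n ▸ rpow_floor_div_log_le hd1 _
      _ ≤ exp (log n * (α / 2) + log (log n) * (-((α - 1) + α))) := exp_le_exp.2 (by linarith)
      _ = _ := by rw [exp_add, rpow_def_of_pos hn, rpow_def_of_pos hLn]
  have hbt : ∀ᶠ n : ℕ in atTop, (b : ℝ) ^ t n / (d : ℝ) ^ s n ≤ d / log n := by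
    filter_upwards [hLpos] with n hLn
    have hlt := exp_div_lt_rpow_floor_div_log hd1 (log (log n) + t n * log b)
    rw [← hs n, exp_add, exp_log hLn, mul_comm (t n), ← rpow_def_of_pos (by linarith)] at hlt
    have := rpow_pos_of_pos (by linarith : (0 : ℝ) < b) (t n)
    calc (b : ℝ) ^ t n / (d : ℝ) ^ s n ≤ b ^ t n / (log n * b ^ t n / d) := by gcongr
      _ = d / log n := by field_simp
  refine ⟨tendsto_div_rpow_div_mul_rpow hΥ0 hgap hLpos (hnpos.mono fun n hn => ?_),
    tendsto_div_div_rpow_of_le_mul_rpow (inv_pos.2 hΥ0) (by linarith) hgap hL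
      (hnpos.mono fun n hn => rpow_pos_of_pos hn _) (.of_forall fun n => by positivity) hds,
    tendsto_of_tendsto_of_tendsto_of_le_of_le' tendsto_const_nhds
      (tendsto_const_nhds.div_atTop hL) (.of_forall fun n => by positivity) hbt⟩
  exact (rpow_pos_of_pos hn _).ne'
end
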